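/- Let (Ω, F, P) be a probability space, T ∈ ℕ, and let ρ*_t : Ω → ℝ^L_{++} and c*_t : Ω → ℝ^L_+ \ {0}, t ∈ {0,…,T}, be random vectors. Let Λ ⊆ ℝ^{T+1}_{++} and Δ ⊆ (0,1]^{T+1} be given sets. Then the following are equivalent: (i) there exist a map u : Ω × ℝ^L_+ → ℝ such that for P-almost every ω the function u(ω, ·) is concave, locally nonsatiated, and continuous, and random vectors (λ_t)_{t=0}^{T} with values in Λ and (δ_t)_{t=0}^{T} with values in Δ, such that P-almost surely, for every t there exists a supergradient ξ_t ∈ ∂u(ω, ·)(c*_t) with δ_t ξ_{t,j} ≤ λ_t ρ*_{t,j} for every coordinate j, with equality whenever c*_{t,j} ≠ 0; (ii) there exist random vectors (v_t)_{t=0}^{T} with positive entries, (λ_t)_{t=0}^{T} with values in Λ, and (δ_t)_{t=0}^{T} with values in Δ such that P-almost surely v_t − v_s ≥ (λ_t/δ_t) ρ*_tᵀ (c*_t − c*_s) for all s, t ∈ {0,…,T}. -/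

import Mathlib

/-!
Afriat's construction. Given (ii), the utility `u c = min_t (v_t + (λ_t/δ_t) ρ_tᵀ (c - c_t))`
is a minimum of finitely many affine functions, hence concave and continuous; it is strictly
increasing in every coordinate because the slopes are positive, and the Afriat inequalities say
exactly that the `t`-th affine piece is active at `c_t`, so `u (c_t) = v_t` and
`(λ_t/δ_t) ρ_t` is a supergradient there. Conversely, given (i), the first-order conditions turn
the supergradient inequality into `u (c_t) - u (c_s) ≥ (λ_t/δ_t) ρ_tᵀ (c_t - c_s)`, so
`v_t = u (c_t)`, shifted by a constant to make it positive, satisfies (ii).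
-/

open MeasureTheory Filter Topology Finset

noncomputable section

/-- Vectors in ℝ^L with the Euclidean norm. -/
abbrev Vec (L : ℕ) := EuclideanSpace ℝ (Fin L)

/-- Inner product (dot product) of two vectors. -/
def dotp {L : ℕ} (p c : Vec L) : ℝ := ∑ j, p j * c j

/-- Componentwise nonnegative vectors: the set ℝ^L_+. -/
def NonnegV {L : ℕ} (c : Vec L) : Prop := ∀ j, 0 ≤ c j

/-- The consumption space ℝ^L_+ \ {0}. -/
def ConsV {L : ℕ} (c : Vec L) : Prop := NonnegV c ∧ c ≠ 0

/-- Componentwise strictly positive vectors: the set ℝ^L_{++}. -/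
def PosV {L : ℕ} (p : Vec L) : Prop := ∀ j, 0 < p j

/-- Concavity of u on its domain ℝ^L_+. -/
def IsConcaveNN {L : ℕ} (u : Vec L → ℝ) : Prop :=
  ∀ c c' : Vec L, NonnegV c → NonnegV c' → ∀ a : ℝ, 0 ≤ a → a ≤ 1 →
    a * u c + (1 - a) * u c' ≤ u (a • c + (1 - a) • c')

/-- Local nonsatiation of u on its domain ℝ^L_+. -/
def LocallyNonsatiatedNN {L : ℕ} (u : Vec L → ℝ) : Prop :=
  ∀ c : Vec L, NonnegV c → ∀ ε : ℝ, 0 < ε →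
    ∃ c' : Vec L, NonnegV c' ∧ ‖c' - c‖ < ε ∧ u c < u c'

/-- Continuity of u on its domain ℝ^L_+. -/
def ContinuousNN {L : ℕ} (u : Vec L → ℝ) : Prop := ContinuousOn u {c | NonnegV c}

/-- A concave, locally nonsatiated, continuous utility function on ℝ^L_+. -/
def NiceUtility {L : ℕ} (u : Vec L → ℝ) : Prop :=
  IsConcaveNN u ∧ LocallyNonsatiatedNN u ∧ ContinuousNN u

/-- ξ is a supergradient of u at c: u(c') − u(c) ≤ ξᵀ(c'−c) for all c' ∈ ℝ^L_+ \ {0}. -/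
def Supergrad {L : ℕ} (u : Vec L → ℝ) (c ξ : Vec L) : Prop :=
  ∀ c' : Vec L, ConsV c' → u c' - u c ≤ dotp ξ (c' - c)

lemma dotp_eq_inner {L : ℕ} (p c : Vec L) : dotp p c = inner ℝ p c := by
  simp [dotp, PiLp.inner_apply, mul_comm]

lemma dotp_sub_comm {L : ℕ} (p x y : Vec L) : dotp p (x - y) = -dotp p (y - x) := by
  rw [dotp_eq_inner, dotp_eq_inner, ← inner_neg_right, neg_sub]

lemma add_one_add_sum_abs_pos {ι : Type*} [Fintype ι] (x : ι → ℝ) (t : ι) :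
    0 < x t + (1 + ∑ s, |x s|) := by
  have h := single_le_sum (f := fun s => |x s|) (fun s _ => abs_nonneg _) (mem_univ t)
  linarith [neg_abs_le (x t)]

section FirstOrderConditions

variable {L : ℕ} {ξ p c c' : Vec L}

lemma mul_dotp_sub_le_dotp_sub {a : ℝ} (hle : ∀ j, ξ j ≤ a * p j)
    (heq : ∀ j, c j ≠ 0 → ξ j = a * p j) (hc' : NonnegV c') :
    a * dotp p (c - c') ≤ dotp ξ (c - c') := by
  simp only [dotp, mul_sum, PiLp.sub_apply]
  refine sum_le_sum fun j _ => ?_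
  by_cases hj : c j = 0
  · rw [hj]
    nlinarith [hle j, hc' j]
  · rw [heq j hj, mul_assoc]

lemma Supergrad.div_mul_dotp_sub_le_sub {u : Vec L → ℝ} (hξ : Supergrad u c ξ) {l δ : ℝ}
    (hδ : 0 < δ) (hle : ∀ j, δ * ξ j ≤ l * p j) (heq : ∀ j, c j ≠ 0 → δ * ξ j = l * p j)
    (hc' : ConsV c') :
    l / δ * dotp p (c - c') ≤ u c - u c' := by
  have hdiv : ∀ j, l * p j = δ * (l / δ * p j) := fun j => by field_simp
  have key := mul_dotp_sub_le_dotp_sub (a := l / δ)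
    (fun j => le_of_mul_le_mul_left ((hle j).trans_eq (hdiv j)) hδ)
    (fun j hj => mul_left_cancel₀ hδ.ne' ((heq j hj).trans (hdiv j))) hc'.1
  linarith [hξ c' hc', dotp_sub_comm ξ c' c]

end FirstOrderConditions

section AfriatUtility

variable {ι : Type*} [Fintype ι] [Nonempty ι] {L : ℕ}

def afriatUtility (v a : ι → ℝ) (p x : ι → Vec L) (c : Vec L) : ℝ :=
  univ.inf' univ_nonempty fun t => v t + a t * dotp (p t) (c - x t)

variable (v a : ι → ℝ) (p x : ι → Vec L)

lemma afriatUtility_le (t : ι) (c : Vec L) :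
    afriatUtility v a p x c ≤ v t + a t * dotp (p t) (c - x t) :=
  inf'_le _ (mem_univ t)

lemma isConcaveNN_afriatUtility : IsConcaveNN (afriatUtility v a p x) := by
  intro c c' _ _ θ hθ0 hθ1
  refine le_inf' _ _ fun t _ => ?_
  have h := afriatUtility_le v a p x t c
  have h' := afriatUtility_le v a p x t c'
  have haff : dotp (p t) (θ • c + (1 - θ) • c' - x t)
      = θ * dotp (p t) (c - x t) + (1 - θ) * dotp (p t) (c' - x t) := by
    have hx : θ • c + (1 - θ) • c' - x t = θ • (c - x t) + (1 - θ) • (c' - x t) := by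
      module
    simp only [dotp_eq_inner, hx, inner_add_right, real_inner_smul_right]
  rw [haff]
  nlinarith [mul_le_mul_of_nonneg_left h hθ0, mul_le_mul_of_nonneg_left h' (sub_nonneg.2 hθ1)]

lemma continuous_afriatUtility : Continuous (afriatUtility v a p x) := by
  refine Continuous.finset_inf'_apply univ_nonempty fun t _ => ?_
  simp only [dotp_eq_inner]
  fun_prop

variable {v a p}

lemma afriatUtility_lt_add_single (ha : ∀ t, 0 < a t) (hp : ∀ t, PosV (p t)) (c : Vec L)
    (j : Fin L) {η : ℝ} (hη : 0 < η) :
    afriatUtility v a p x c < afriatUtility v a p x (c + EuclideanSpace.single j η) := by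
  obtain ⟨t, -, ht⟩ := exists_mem_eq_inf' univ_nonempty
    fun t => v t + a t * dotp (p t) (c + EuclideanSpace.single j η - x t)
  have hshift : dotp (p t) (c + EuclideanSpace.single j η - x t)
      = dotp (p t) (c - x t) + η * p t j := by
    rw [add_sub_right_comm, dotp_eq_inner, inner_add_right, EuclideanSpace.inner_single_right,
      dotp_eq_inner, conj_trivial]
  have hgain : 0 < a t * (η * p t j) := mul_pos (ha t) (mul_pos hη (hp t j))
  calc afriatUtility v a p x c ≤ v t + a t * dotp (p t) (c - x t) := afriatUtility_le v a p x t c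
    _ < v t + a t * dotp (p t) (c + EuclideanSpace.single j η - x t) := by
      rw [hshift]; linarith
    _ = afriatUtility v a p x (c + EuclideanSpace.single j η) := ht.symm

lemma locallyNonsatiatedNN_afriatUtility (ha : ∀ t, 0 < a t) (hp : ∀ t, PosV (p t))
    (j : Fin L) : LocallyNonsatiatedNN (afriatUtility v a p x) := by
  intro c hc ε hε
  refine ⟨c + EuclideanSpace.single j (ε / 2), fun i => ?_, ?_,
    afriatUtility_lt_add_single x ha hp c j (half_pos hε)⟩
  · rw [PiLp.add_apply, PiLp.single_apply]
    split_ifs <;> linarith [hc i]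
  · rw [add_sub_cancel_left, PiLp.norm_single, Real.norm_of_nonneg (half_pos hε).le]
    exact half_lt_self hε

lemma afriatUtility_apply_self (hv : ∀ s t, v t - v s ≥ a t * dotp (p t) (x t - x s))
    (t : ι) : afriatUtility v a p x (x t) = v t := by
  refine le_antisymm ?_ (le_inf' _ _ fun s _ => ?_)
  · simpa [dotp] using afriatUtility_le v a p x t (x t)
  · have h := hv t s
    rw [dotp_sub_comm] at h
    linarith

lemma supergrad_afriatUtility (hv : ∀ s t, v t - v s ≥ a t * dotp (p t) (x t - x s))
    (t : ι) : Supergrad (afriatUtility v a p x) (x t) (a t • p t) := by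
  intro c _
  rw [afriatUtility_apply_self x hv, dotp_eq_inner, real_inner_smul_left, ← dotp_eq_inner]
  linarith [afriatUtility_le v a p x t c]

end AfriatUtility

theorem stmt_7_general {L T : ℕ} {Ω : Type*} [MeasurableSpace Ω] (P : Measure Ω)
    (ρs cs : Fin (T + 1) → Ω → Vec L)
    (hρ : ∀ t ω, PosV (ρs t ω)) (hc : ∀ t ω, ConsV (cs t ω))
    (Λ : Set (Fin (T + 1) → ℝ)) (hΛ : ∀ l ∈ Λ, ∀ t, 0 < l t)
    (Δ : Set (Fin (T + 1) → ℝ)) (hΔ : ∀ δ ∈ Δ, ∀ t, 0 < δ t ∧ δ t ≤ 1) :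
    (∃ (u : Ω → Vec L → ℝ) (lam del : Ω → Fin (T + 1) → ℝ),
        (∀ ω, lam ω ∈ Λ) ∧ (∀ ω, del ω ∈ Δ) ∧
        (∀ᵐ ω ∂P, NiceUtility (u ω)) ∧
        (∀ᵐ ω ∂P, ∀ t, ∃ ξ : Vec L, Supergrad (u ω) (cs t ω) ξ ∧
            (∀ j, del ω t * ξ j ≤ lam ω t * ρs t ω j) ∧
            (∀ j, cs t ω j ≠ 0 → del ω t * ξ j = lam ω t * ρs t ω j)))
    ↔ (∃ v lam del : Ω → Fin (T + 1) → ℝ,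
        (∀ ω t, 0 < v ω t) ∧ (∀ ω, lam ω ∈ Λ) ∧ (∀ ω, del ω ∈ Δ) ∧
        (∀ᵐ ω ∂P, ∀ s t,
          v ω t - v ω s ≥ (lam ω t / del ω t) * dotp (ρs t ω) (cs t ω - cs s ω))) := by
  have hδ : ∀ del : Ω → Fin (T + 1) → ℝ, (∀ ω, del ω ∈ Δ) → ∀ ω t, 0 < del ω t :=
    fun del hdel ω t => (hΔ _ (hdel ω) t).1
  constructor
  · rintro ⟨u, lam, del, hlam, hdel, -, hfoc⟩
    refine ⟨fun ω t => u ω (cs t ω) + (1 + ∑ s, |u ω (cs s ω)|), lam, del,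
      fun ω => add_one_add_sum_abs_pos _, hlam, hdel, ?_⟩
    filter_upwards [hfoc] with ω hω s t
    obtain ⟨ξ, hξ, hle, heq⟩ := hω t
    linarith [hξ.div_mul_dotp_sub_le_sub (hδ del hdel ω t) hle heq (hc s ω)]
  · rintro ⟨v, lam, del, -, hlam, hdel, hv⟩
    refine ⟨fun ω => afriatUtility (v ω) (fun t => lam ω t / del ω t) (ρs · ω) (cs · ω),
      lam, del, hlam, hdel, ae_of_all _ fun ω => ?_, ?_⟩
    · obtain ⟨j, -⟩ : ∃ j, cs 0 ω j ≠ 0 := by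
        by_contra! h
        exact (hc 0 ω).2 (PiLp.ext h)
      exact ⟨isConcaveNN_afriatUtility _ _ _ _,
        locallyNonsatiatedNN_afriatUtility _
          (fun t => div_pos (hΛ _ (hlam ω) t) (hδ del hdel ω t)) (fun t => hρ t ω) j,
        (continuous_afriatUtility _ _ _ _).continuousOn⟩
    · filter_upwards [hv] with ω hω t
      have hfoc : ∀ j, del ω t * ((lam ω t / del ω t) • ρs t ω) j = lam ω t * ρs t ω j :=
        fun j => by
          rw [PiLp.smul_apply, smul_eq_mul, ← mul_assoc, mul_div_cancel₀ _ (hδ del hdel ω t).ne']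
      exact ⟨_, supergrad_afriatUtility _ hω t, fun j => (hfoc j).le, fun j _ => hfoc j⟩

/-- equivalence between s/m-rationalizability of a random array
(ρ*_t, c*_t)_{t=0}^{T} (first-order conditions with random utility, marginal utilities of
income with values in Λ and discount rates with values in Δ) and the existence of positive
random vectors (v_t) satisfying the Afriat-type inequalities almost surely. -/
theorem stmt_7 {L T : ℕ} {Ω : Type*} [MeasurableSpace Ω] (P : Measure Ω)
    [IsProbabilityMeasure P]
    (ρs cs : Fin (T + 1) → Ω → Vec L)
    (hρmeas : ∀ t, Measurable (ρs t)) (hcmeas : ∀ t, Measurable (cs t))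
    (hρ : ∀ t ω, PosV (ρs t ω)) (hc : ∀ t ω, ConsV (cs t ω))
    (Λ : Set (Fin (T + 1) → ℝ)) (hΛ : ∀ l ∈ Λ, ∀ t, 0 < l t)
    (Δ : Set (Fin (T + 1) → ℝ)) (hΔ : ∀ δ ∈ Δ, ∀ t, 0 < δ t ∧ δ t ≤ 1) :
    (∃ (u : Ω → Vec L → ℝ) (lam del : Ω → Fin (T + 1) → ℝ),
        (∀ ω, lam ω ∈ Λ) ∧ (∀ ω, del ω ∈ Δ) ∧
        (∀ᵐ ω ∂P, NiceUtility (u ω)) ∧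
        (∀ᵐ ω ∂P, ∀ t, ∃ ξ : Vec L, Supergrad (u ω) (cs t ω) ξ ∧
            (∀ j, del ω t * ξ j ≤ lam ω t * ρs t ω j) ∧
            (∀ j, cs t ω j ≠ 0 → del ω t * ξ j = lam ω t * ρs t ω j)))
    ↔ (∃ v lam del : Ω → Fin (T + 1) → ℝ,
        (∀ ω t, 0 < v ω t) ∧ (∀ ω, lam ω ∈ Λ) ∧ (∀ ω, del ω ∈ Δ) ∧
        (∀ᵐ ω ∂P, ∀ s t,
          v ω t - v ω s ≥ (lam ω t / del ω t) * dotp (ρs t ω) (cs t ω - cs s ω))) :=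
  stmt_7_general P ρs cs hρ hc Λ hΛ Δ hΔ

end
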